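/- Violating histories witness semantic violation: for every closed formula φ in sHML∨ and every system state p, if there exists a history H ⊆ T(p) with (H, b) ⊨viol φ, then p ∉ ⟦φ⟧ (p violates φ in the branching-time semantics). -/

import Mathlib

/-!
By induction on the derivation of `(H, b) ⊨viol φ`, `H` contains a nonempty sub-history `H'`,
a single trace when the flag `b` is false, such that every state producing all traces of `H'`
violates `φ`. At a modality `[a]φ`, such an `H'` for `(aft H a, b ∧ Det a)` yields `a·H'` for
`(H, b)`: a state producing `a·H'` has a weak `a`-derivative producing `H'`, because when `a` is
deterministic all its `a`-derivatives have the same traces, and otherwise `H'` is one trace.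
Greatest fixed points are handled by the unfolding `⟦max X.φ⟧ ⊆ ⟦φ[max X.φ/X]⟧`, which needs
`φ` closed.
-/
/-- An Instrumentable Labelled Transition System (ILTS): states `Prc`,
traceable actions `Act` (labels `some a`), silent action `τ` (label `none`),
an equivalence on states respected by transitions, silent transitions
confluent with all actions, and a determinacy predicate `det`. -/
structure ILTS (Prc Act : Type) where
  step : Prc → Option Act → Prc → Prop
  eqv : Prc → Prc → Prop
  ext : Act → Prop
  det : Act → Bool
  eqv_equiv : Equivalence eqv
  eqv_resp : ∀ p q l p', eqv p q → step p l p' → ∃ q', step q l q' ∧ eqv p' q'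
  tau_tau : ∀ p p' p'', step p none p' → step p none p'' → eqv p' p''
  tau_conf : ∀ p p' a p'', step p none p' → step p (some a) p'' →
      ∃ q, step p' (some a) q ∧ step p'' none q
  det_spec : ∀ a, det a = true →
      ∀ p p' p'', step p (some a) p' → step p (some a) p'' → eqv p' p''

/-- Weak traceable transitions `p ⇒t q`: abstract over silent actions only. -/
inductive ILTS.wt {Prc Act : Type} (S : ILTS Prc Act) : Prc → List Act → Prc → Prop
  | refl : ∀ p, ILTS.wt S p [] p
  | tau : ∀ {p p' t q}, S.step p none p' → ILTS.wt S p' t q → ILTS.wt S p t q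
  | act : ∀ {p a p' t q}, S.step p (some a) p' → ILTS.wt S p' t q → ILTS.wt S p (a :: t) q

/-- The set of traces producible by a state. -/
def ILTS.traces {Prc Act : Type} (S : ILTS Prc Act) (p : Prc) : Set (List Act) :=
  { t | ∃ q, S.wt p t q }

/-- Formulae of the monitorable fragment sHML∨ (de Bruijn recursion
variables): truth, falsity, conjunction, disjunction, universal modality,
greatest fixed point, and recursion variables. -/
inductive SFrm (Act : Type) : Type
  | tt : SFrm Act
  | ff : SFrm Act
  | and : SFrm Act → SFrm Act → SFrm Act
  | or : SFrm Act → SFrm Act → SFrm Act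
  | box : Act → SFrm Act → SFrm Act
  | max : SFrm Act → SFrm Act
  | var : Nat → SFrm Act

/-- Substitute formula `s` for variable `k` in a formula. -/
def SFrm.substV {Act : Type} : SFrm Act → Nat → SFrm Act → SFrm Act
  | .tt, _, _ => .tt
  | .ff, _, _ => .ff
  | .and φ ψ, k, s => .and (φ.substV k s) (ψ.substV k s)
  | .or φ ψ, k, s => .or (φ.substV k s) (ψ.substV k s)
  | .box a φ, k, s => .box a (φ.substV k s)
  | .max φ, k, s => .max (φ.substV (k + 1) s)
  | .var n, k, s => if n = k then s else .var n

/-- `aft H a`: the continuations of the traces in `H` that start with `a`. -/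
def aft {Act : Type} (H : Set (List Act)) (a : Act) : Set (List Act) :=
  { t | a :: t ∈ H }

/-- The history violation relation `(H, b) ⊨viol φ`, relative to the
determinacy predicate `Det` and externality predicate `Ext` on actions. -/
inductive Viol {Act : Type} (Det : Act → Bool) (Ext : Act → Prop) :
    Set (List Act) → Bool → SFrm Act → Prop
  | ff : ∀ {H : Set (List Act)} {b : Bool}, H ≠ ∅ → Viol Det Ext H b .ff
  | um : ∀ {H : Set (List Act)} {b : Bool} {a : Act} {φ : SFrm Act},
      Viol Det Ext (aft H a) (b && Det a) φ → Viol Det Ext H b (.box a φ)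
  | umPre : ∀ {H : Set (List Act)} {b : Bool} {a i : Act} {φ : SFrm Act},
      ¬ Ext i → Viol Det Ext (aft H i) (b && Det i) (.box a φ) →
      Viol Det Ext H b (.box a φ)
  | andL : ∀ {H : Set (List Act)} {b : Bool} {φ ψ : SFrm Act},
      Viol Det Ext H b φ → Viol Det Ext H b (.and φ ψ)
  | andR : ∀ {H : Set (List Act)} {b : Bool} {φ ψ : SFrm Act},
      Viol Det Ext H b ψ → Viol Det Ext H b (.and φ ψ)
  | or : ∀ {H : Set (List Act)} {φ ψ : SFrm Act},
      Viol Det Ext H true φ → Viol Det Ext H true ψ →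
      Viol Det Ext H true (.or φ ψ)
  | max : ∀ {H : Set (List Act)} {b : Bool} {φ : SFrm Act},
      Viol Det Ext H b (φ.substV 0 (.max φ)) → Viol Det Ext H b (.max φ)

/-- Unobservable moves of an ILTS: silent steps and internal-action steps. -/
def ILTS.unobs {Prc Act : Type} (S : ILTS Prc Act) (p q : Prc) : Prop :=
  S.step p none q ∨ ∃ i, S.step p (some i) q ∧ ¬ S.ext i

/-- Weak transition `p ⇒a q` for an external action `a`: abstracts over silent
and internal actions. -/
def ILTS.weakE {Prc Act : Type} (S : ILTS Prc Act) (p : Prc) (a : Act)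
    (q : Prc) : Prop :=
  ∃ p₁ p₂, Relation.ReflTransGen S.unobs p p₁ ∧ S.step p₁ (some a) p₂ ∧
    Relation.ReflTransGen S.unobs p₂ q

/-- Prepend a set to an environment. -/
def scons {Prc : Type} (P : Set Prc) (ρ : Nat → Set Prc) : Nat → Set Prc
  | 0 => P
  | n + 1 => ρ n

/-- Denotational branching-time semantics of sHML∨ formulae over an ILTS. -/
def ILTS.fsem {Prc Act : Type} (S : ILTS Prc Act) :
    SFrm Act → (Nat → Set Prc) → Set Prc
  | .tt, _ => Set.univ
  | .ff, _ => ∅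
  | .and φ ψ, ρ => S.fsem φ ρ ∩ S.fsem ψ ρ
  | .or φ ψ, ρ => S.fsem φ ρ ∪ S.fsem ψ ρ
  | .box a φ, ρ => { p | ∀ q, S.weakE p a q → q ∈ S.fsem φ ρ }
  | .max φ, ρ => ⋃₀ { P | P ⊆ S.fsem φ (scons P ρ) }
  | .var n, ρ => ρ n

/-- `φ` has all free variables below `k` (so `closedUnder φ 0` means closed). -/
def closedUnder {Act : Type} : SFrm Act → Nat → Prop
  | .tt, _ => True
  | .ff, _ => True
  | .and φ ψ, k => closedUnder φ k ∧ closedUnder ψ k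
  | .or φ ψ, k => closedUnder φ k ∧ closedUnder ψ k
  | .box _ φ, k => closedUnder φ k
  | .max φ, k => closedUnder φ (k + 1)
  | .var n, k => n < k

theorem closedUnder_mono {Act : Type} :
    ∀ (φ : SFrm Act) {k k' : Nat}, k ≤ k' → closedUnder φ k → closedUnder φ k'
  | .tt, _, _, _, _ => trivial
  | .ff, _, _, _, _ => trivial
  | .and φ ψ, _, _, h, hc => ⟨closedUnder_mono φ h hc.1, closedUnder_mono ψ h hc.2⟩
  | .or φ ψ, _, _, h, hc => ⟨closedUnder_mono φ h hc.1, closedUnder_mono ψ h hc.2⟩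
  | .box _ φ, _, _, h, hc => closedUnder_mono φ h hc
  | .max φ, _, _, h, hc => closedUnder_mono φ (Nat.succ_le_succ h) hc
  | .var _, _, _, h, hc => Nat.lt_of_lt_of_le hc h

theorem closedUnder_substV {Act : Type} {s : SFrm Act} (hs : closedUnder s 0) :
    ∀ (φ : SFrm Act) (k : Nat), closedUnder φ (k + 1) → closedUnder (φ.substV k s) k
  | .tt, _, _ => trivial
  | .ff, _, _ => trivial
  | .and φ ψ, k, hc => ⟨closedUnder_substV hs φ k hc.1, closedUnder_substV hs ψ k hc.2⟩
  | .or φ ψ, k, hc => ⟨closedUnder_substV hs φ k hc.1, closedUnder_substV hs ψ k hc.2⟩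
  | .box _ φ, k, hc => closedUnder_substV hs φ k hc
  | .max φ, k, hc => closedUnder_substV hs φ (k + 1) hc
  | .var n, k, hc => by
      by_cases h : n = k
      · simpa [SFrm.substV, h] using closedUnder_mono s (Nat.zero_le k) hs
      · simpa [SFrm.substV, h, closedUnder] using Nat.lt_of_le_of_ne (Nat.lt_succ_iff.mp hc) h

theorem scons_le_scons {Prc : Type} {P Q : Set Prc} {ρ ρ' : Nat → Set Prc} (hP : P ⊆ Q)
    (hρ : ρ ≤ ρ') : scons P ρ ≤ scons Q ρ'
  | 0 => hP
  | n + 1 => hρ n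

namespace ILTS

variable {Prc Act : Type} (S : ILTS Prc Act)

theorem traces_subset_of_eqv {p q : Prc} (h : S.eqv p q) : S.traces p ⊆ S.traces q := by
  rintro t ⟨r, hw⟩
  induction hw generalizing q with
  | refl => exact ⟨q, .refl q⟩
  | tau hs _ ih =>
      obtain ⟨q', hq', he⟩ := S.eqv_resp _ _ _ _ h hs
      obtain ⟨r', hr'⟩ := ih he
      exact ⟨r', .tau hq' hr'⟩
  | act hs _ ih =>
      obtain ⟨q', hq', he⟩ := S.eqv_resp _ _ _ _ h hs
      obtain ⟨r', hr'⟩ := ih he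
      exact ⟨r', .act hq' hr'⟩

theorem traces_subset_of_tau {p q : Prc} (h : S.step p none q) : S.traces p ⊆ S.traces q := by
  rintro t ⟨r, hw⟩
  induction hw generalizing q with
  | refl => exact ⟨q, .refl q⟩
  | tau hs hw _ => exact S.traces_subset_of_eqv (S.tau_tau _ _ _ hs h) ⟨_, hw⟩
  | act hs _ ih =>
      obtain ⟨w, hqw, hw⟩ := S.tau_conf _ _ _ _ h hs
      obtain ⟨r', hr'⟩ := ih hw
      exact ⟨r', .act hqw hr'⟩

theorem traces_subset_of_silent {p q : Prc}
    (h : Relation.ReflTransGen (S.step · none ·) p q) : S.traces p ⊆ S.traces q := by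
  induction h with
  | refl => exact subset_rfl
  | tail _ hs ih => exact ih.trans (S.traces_subset_of_tau hs)

theorem mem_traces_of_det_step {a : Act} (hdet : S.det a = true) {p q : Prc} {t : List Act}
    (hq : S.step p (some a) q) (ht : a :: t ∈ S.traces p) : t ∈ S.traces q := by
  obtain ⟨r, hw⟩ := ht
  generalize hu : a :: t = u at hw
  induction hw generalizing q with
  | refl => cases hu
  | tau hs _ ih =>
      obtain ⟨w, hw, hqw⟩ := S.tau_conf _ _ _ _ hs hq
      obtain ⟨r', hr'⟩ := ih hw hu
      exact ⟨r', .tau hqw hr'⟩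
  | act hs hw =>
      obtain ⟨rfl, rfl⟩ := List.cons.inj hu
      exact S.traces_subset_of_eqv (S.eqv_equiv.symm (S.det_spec a hdet _ _ _ hq hs)) ⟨_, hw⟩

def WeakStep (p : Prc) (a : Act) (q : Prc) : Prop :=
  ∃ p', Relation.ReflTransGen (S.step · none ·) p p' ∧ S.step p' (some a) q

theorem exists_weakStep_of_cons_mem_traces {p : Prc} {a : Act} {t : List Act}
    (h : a :: t ∈ S.traces p) : ∃ q, S.WeakStep p a q ∧ t ∈ S.traces q := by
  obtain ⟨r, hw⟩ := h
  generalize hu : a :: t = u at hw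
  induction hw with
  | refl => cases hu
  | tau hs _ ih =>
      obtain ⟨q, ⟨p', hp', hq⟩, ht⟩ := ih hu
      exact ⟨q, ⟨p', .head hs hp', hq⟩, ht⟩
  | act hs hw =>
      obtain ⟨rfl, rfl⟩ := List.cons.inj hu
      exact ⟨_, ⟨_, .refl, hs⟩, _, hw⟩

theorem aft_subset_traces_of_det {a : Act} (hdet : S.det a = true) {H : Set (List Act)}
    {p q : Prc} (hH : H ⊆ S.traces p) (hq : S.WeakStep p a q) : aft H a ⊆ S.traces q := by
  obtain ⟨p', hp', hq⟩ := hq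
  exact fun t ht => S.mem_traces_of_det_step hdet hq (S.traces_subset_of_silent hp' (hH ht))

theorem unobs_of_silent {p q : Prc} (h : Relation.ReflTransGen (S.step · none ·) p q) :
    Relation.ReflTransGen S.unobs p q :=
  Relation.ReflTransGen.mono (fun _ _ => Or.inl) _ _ h

theorem fsem_congr : ∀ (φ : SFrm Act) {k : Nat} {ρ ρ' : Nat → Set Prc},
    closedUnder φ k → (∀ n < k, ρ n = ρ' n) → S.fsem φ ρ = S.fsem φ ρ'
  | .tt, _, _, _, _, _ => rfl
  | .ff, _, _, _, _, _ => rfl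
  | .and φ ψ, _, _, _, hc, h => by
      rw [fsem, fsem, fsem_congr φ hc.1 h, fsem_congr ψ hc.2 h]
  | .or φ ψ, _, _, _, hc, h => by
      rw [fsem, fsem, fsem_congr φ hc.1 h, fsem_congr ψ hc.2 h]
  | .box _ φ, _, _, _, hc, h => by
      rw [fsem, fsem, fsem_congr φ hc h]
  | .max φ, _, ρ, ρ', hc, h => by
      have hP (P : Set Prc) : S.fsem φ (scons P ρ) = S.fsem φ (scons P ρ') :=
        fsem_congr φ hc fun
          | 0, _ => rfl
          | n + 1, hn => h n (Nat.lt_of_succ_lt_succ hn)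
      simp only [fsem, hP]
  | .var n, _, _, _, hc, h => h n hc

theorem fsem_monotone : ∀ φ : SFrm Act, Monotone (S.fsem (Prc := Prc) φ)
  | .tt, _, _, _ => le_rfl
  | .ff, _, _, _ => le_rfl
  | .and φ ψ, _, _, h => Set.inter_subset_inter (fsem_monotone φ h) (fsem_monotone ψ h)
  | .or φ ψ, _, _, h => Set.union_subset_union (fsem_monotone φ h) (fsem_monotone ψ h)
  | .box _ φ, _, _, h => fun _ hp q hq => fsem_monotone φ h (hp q hq)
  | .max φ, _, _, h => fun _ ⟨P, hP, hp⟩ =>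
      ⟨P, fun _ hx => fsem_monotone φ (scons_le_scons subset_rfl h) (hP hx), hp⟩
  | .var n, _, _, h => h n

theorem fsem_substV {s : SFrm Act} (hs : closedUnder s 0) :
    ∀ (φ : SFrm Act) (k : Nat) (ρ : Nat → Set Prc),
      S.fsem (φ.substV k s) ρ = S.fsem φ (Function.update ρ k (S.fsem s ρ))
  | .tt, _, _ => rfl
  | .ff, _, _ => rfl
  | .and φ ψ, k, ρ => by
      simp only [SFrm.substV, fsem, fsem_substV hs φ k ρ, fsem_substV hs ψ k ρ]
  | .or φ ψ, k, ρ => by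
      simp only [SFrm.substV, fsem, fsem_substV hs φ k ρ, fsem_substV hs ψ k ρ]
  | .box _ φ, k, ρ => by
      simp only [SFrm.substV, fsem, fsem_substV hs φ k ρ]
  | .max φ, k, ρ => by
      have hP (P : Set Prc) : Function.update (scons P ρ) (k + 1) (S.fsem s (scons P ρ)) =
          scons P (Function.update ρ k (S.fsem s ρ)) := by
        rw [S.fsem_congr s (ρ' := ρ) hs nofun]
        funext n
        cases n <;> simp [scons, Function.update_apply]
      simp only [SFrm.substV, fsem, fsem_substV hs φ (k + 1), hP]
  | .var n, k, ρ => by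
      by_cases h : n = k <;> simp [SFrm.substV, fsem, h]

theorem fsem_max_subset {φ : SFrm Act} (hc : closedUnder (.max φ) 0) (ρ : Nat → Set Prc) :
    S.fsem (.max φ) ρ ⊆ S.fsem (φ.substV 0 (.max φ)) ρ := by
  rintro p ⟨P, hP, hp⟩
  have hPmax : P ⊆ S.fsem (.max φ) ρ := fun x hx => ⟨P, hP, hx⟩
  have hunfold : S.fsem φ (scons (S.fsem (.max φ) ρ) ρ) =
      S.fsem φ (Function.update ρ 0 (S.fsem (.max φ) ρ)) :=
    S.fsem_congr φ hc fun | 0, _ => rfl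
  rw [S.fsem_substV hc, ← hunfold]
  exact S.fsem_monotone φ (scons_le_scons hPmax le_rfl) (hP hp)

theorem mem_fsem_of_weakStep_box {a : Act} {φ : SFrm Act} {ρ : Nat → Set Prc} {p q : Prc}
    (hp : p ∈ S.fsem (.box a φ) ρ) (hq : S.WeakStep p a q) : q ∈ S.fsem φ ρ :=
  let ⟨p', hp', hq⟩ := hq
  hp q ⟨p', q, S.unobs_of_silent hp', hq, .refl⟩

theorem mem_fsem_box_of_weakStep_internal {a i : Act} {φ : SFrm Act} {ρ : Nat → Set Prc}
    {p q : Prc} (hi : ¬ S.ext i) (hp : p ∈ S.fsem (.box a φ) ρ) (hq : S.WeakStep p i q) :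
    q ∈ S.fsem (.box a φ) ρ := by
  obtain ⟨p', hp', hq⟩ := hq
  rintro r ⟨p₁, p₂, h₁, h₂, h₃⟩
  have hunobs : Relation.ReflTransGen S.unobs p q :=
    (S.unobs_of_silent hp').tail (Or.inr ⟨i, hq, hi⟩)
  exact hp r ⟨p₁, p₂, hunobs.trans h₁, h₂, h₃⟩

def Refutes (H : Set (List Act)) (φ : SFrm Act) : Prop :=
  ∀ p, H ⊆ S.traces p → ∀ ρ, p ∉ S.fsem φ ρ

def WitnessesViolation (H : Set (List Act)) (b : Bool) (φ : SFrm Act) : Prop :=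
  ∃ H' ⊆ H, H'.Nonempty ∧ (b = false → H'.Subsingleton) ∧ S.Refutes H' φ

variable {S}

theorem WitnessesViolation.of_aft {x : Act} {ψ ψ' : SFrm Act}
    (hstep : ∀ {p q ρ}, p ∈ S.fsem ψ ρ → S.WeakStep p x q → q ∈ S.fsem ψ' ρ)
    {H : Set (List Act)} {b : Bool} (h : S.WitnessesViolation (aft H x) (b && S.det x) ψ') :
    S.WitnessesViolation H b ψ := by
  obtain ⟨H', hH', ⟨t₀, ht₀⟩, hsub, hr⟩ := h
  refine ⟨(x :: ·) '' H', Set.image_subset_iff.mpr hH', ⟨_, t₀, ht₀, rfl⟩,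
    fun hb => (hsub (by simp [hb])).image _, ?_⟩
  rintro p hp ρ hψ
  obtain ⟨q, hq, ht₀q⟩ := S.exists_weakStep_of_cons_mem_traces (hp ⟨t₀, ht₀, rfl⟩)
  refine hr q (fun t ht => ?_) ρ (hstep hψ hq)
  cases hdet : S.det x
  · exact hsub (by simp [hdet]) ht₀ ht ▸ ht₀q
  · exact S.aft_subset_traces_of_det hdet hp hq ⟨t, ht, rfl⟩

theorem WitnessesViolation.of_fsem_subset {H : Set (List Act)} {b : Bool} {φ ψ : SFrm Act}
    (h : S.WitnessesViolation H b φ) (hφψ : ∀ ρ, S.fsem ψ ρ ⊆ S.fsem φ ρ) :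
    S.WitnessesViolation H b ψ :=
  let ⟨H', hH', hne, hsub, hr⟩ := h
  ⟨H', hH', hne, hsub, fun p hp ρ hψ => hr p hp ρ (hφψ ρ hψ)⟩

theorem witnessesViolation_of_viol {H : Set (List Act)} {b : Bool} {φ : SFrm Act}
    (hv : Viol S.det S.ext H b φ) (hc : closedUnder φ 0) : S.WitnessesViolation H b φ := by
  induction hv with
  | ff hne =>
      obtain ⟨t, ht⟩ := Set.nonempty_iff_ne_empty.mpr hne
      exact ⟨{t}, Set.singleton_subset_iff.mpr ht, Set.singleton_nonempty t,
        fun _ => Set.subsingleton_singleton, fun _ _ _ hp => hp⟩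
  | um _ ih => exact (ih hc).of_aft fun hp hq => S.mem_fsem_of_weakStep_box hp hq
  | umPre hi _ ih =>
      exact (ih hc).of_aft fun hp hq => S.mem_fsem_box_of_weakStep_internal hi hp hq
  | andL _ ih => exact (ih hc.1).of_fsem_subset fun _ => Set.inter_subset_left
  | andR _ ih => exact (ih hc.2).of_fsem_subset fun _ => Set.inter_subset_right
  | or _ _ ih₁ ih₂ =>
      obtain ⟨H₁, hH₁, hne, -, hr₁⟩ := ih₁ hc.1
      obtain ⟨H₂, hH₂, -, -, hr₂⟩ := ih₂ hc.2
      refine ⟨H₁ ∪ H₂, Set.union_subset hH₁ hH₂, hne.mono Set.subset_union_left, nofun,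
        ?_⟩
      rintro p hp ρ (hφ | hψ)
      · exact hr₁ p (Set.subset_union_left.trans hp) ρ hφ
      · exact hr₂ p (Set.subset_union_right.trans hp) ρ hψ
  | max _ ih => exact (ih (closedUnder_substV hc _ 0 hc)).of_fsem_subset (S.fsem_max_subset hc)

end ILTS

/-- Violating histories witness semantic violation: if some history produced by
`p` violates the closed formula `φ`, then `p` violates `φ` in the
branching-time semantics. -/
theorem viol_implies_not_sat {Prc Act : Type} (S : ILTS Prc Act)
    (φ : SFrm Act) (hclosed : closedUnder φ 0) (p : Prc) (b : Bool)
    (h : ∃ H : Set (List Act), H ⊆ S.traces p ∧ Viol S.det S.ext H b φ) :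
    ∀ ρ : Nat → Set Prc, p ∉ S.fsem φ ρ := by
  obtain ⟨H, hH, hv⟩ := h
  obtain ⟨H', hH', -, -, hr⟩ := ILTS.witnessesViolation_of_viol hv hclosed
  exact hr p (hH'.trans hH)
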